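/- Suppose the density f satisfies: for every c > 0, δ·∫_0^{c/δ} x·f(x) dx → 0 as δ → 0⁺. Then for every integer n ≥ 2, lim_{δ→0⁺} Q_δ(n) = 2/(n+1), and consequently ∑_{n=1}^∞ Q_δ(n) tends to +∞ as δ → 0⁺. -/
import Mathlib


open scoped BigOperators
open Filter Set MeasureTheory

/-- `Q f δ n = ℙ(τ ≥ n)` for the 1-d senile reinforced random walk stochastically
perturbed by `δ·ξ_n`, with `ξ_n` i.i.d. with density `f` on `[0,∞)`:
`Q_δ(n) = ∏_{i=1}^{n-1} ∫_0^{(i+1)/(δ(i+2))} ((i+1)/(i+2) - δx) f(x) dx`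
(`Q f δ 1 = 1` since the product is empty). -/
noncomputable def Q (f : ℝ → ℝ) (δ : ℝ) (n : ℕ) : ℝ :=
  ∏ i ∈ Finset.Icc 1 (n - 1),
    ∫ x in Set.Ioc (0 : ℝ) (((i : ℝ) + 1) / (δ * ((i : ℝ) + 2))),
      (((i : ℝ) + 1) / ((i : ℝ) + 2) - δ * x) * f x

noncomputable def Ifun (f : ℝ → ℝ) (δ a : ℝ) : ℝ :=
  ∫ x in Set.Ioc (0 : ℝ) (a / δ), (a - δ * x) * f x

lemma aux_int_f {f : ℝ → ℝ} (hfint : IntegrableOn f (Set.Ioi 0)) (T : ℝ) :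
    IntegrableOn f (Set.Ioc 0 T) :=
  hfint.mono_set Set.Ioc_subset_Ioi_self

lemma aux_int_xf {f : ℝ → ℝ} (hmeas : Measurable f) (hnonneg : ∀ x, 0 ≤ f x)
    (hfint : IntegrableOn f (Set.Ioi 0)) (T : ℝ) :
    IntegrableOn (fun x => x * f x) (Set.Ioc 0 T) := by
  refine Integrable.mono' ((aux_int_f hfint T).const_mul T)
    ((measurable_id.mul hmeas).aestronglyMeasurable) ?_
  rw [ae_restrict_iff' measurableSet_Ioc]
  refine Filter.Eventually.of_forall (fun x hx => ?_)
  rw [Real.norm_eq_abs, abs_of_nonneg (mul_nonneg hx.1.le (hnonneg x))]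
  exact mul_le_mul_of_nonneg_right hx.2 (hnonneg x)

lemma aux_int_lin {f : ℝ → ℝ} (hmeas : Measurable f) (hnonneg : ∀ x, 0 ≤ f x)
    (hfint : IntegrableOn f (Set.Ioi 0)) (c δ T : ℝ) :
    IntegrableOn (fun x => (c - δ * x) * f x) (Set.Ioc 0 T) := by
  have h : (fun x => (c - δ * x) * f x) = fun x => c * f x - δ * (x * f x) := by
    funext x; ring
  rw [h]
  exact ((aux_int_f hfint T).const_mul c).sub
    ((aux_int_xf hmeas hnonneg hfint T).const_mul δ)

lemma Ifun_split {f : ℝ → ℝ} (hmeas : Measurable f) (hnonneg : ∀ x, 0 ≤ f x)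
    (hfint : IntegrableOn f (Set.Ioi 0)) (δ a : ℝ) :
    Ifun f δ a = a * (∫ x in Set.Ioc (0:ℝ) (a / δ), f x)
      - δ * ∫ x in Set.Ioc (0:ℝ) (a / δ), x * f x := by
  unfold Ifun
  have h : ∀ x : ℝ, (a - δ * x) * f x = a * f x - δ * (x * f x) := fun x => by ring
  simp_rw [h]
  rw [integral_sub ((aux_int_f hfint _).const_mul a)
    ((aux_int_xf hmeas hnonneg hfint _).const_mul δ), integral_const_mul, integral_const_mul]

lemma Ifun_nonneg {f : ℝ → ℝ} (hnonneg : ∀ x, 0 ≤ f x) {δ a : ℝ} (hδ : 0 < δ) (ha : 0 ≤ a) :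
    0 ≤ Ifun f δ a := by
  refine setIntegral_nonneg measurableSet_Ioc (fun x hx => mul_nonneg ?_ (hnonneg x))
  have := hx.2
  rw [le_div_iff₀ hδ] at this
  nlinarith

lemma Ifun_le {f : ℝ → ℝ} (hmeas : Measurable f) (hnonneg : ∀ x, 0 ≤ f x)
    (hfint : IntegrableOn f (Set.Ioi 0)) {δ a : ℝ} (hδ : 0 < δ) (ha0 : 0 ≤ a) (ha1 : a ≤ 1) :
    Ifun f δ a ≤ Ifun f δ 1 := by
  unfold Ifun
  have step1 : (∫ x in Set.Ioc (0:ℝ) (a / δ), (a - δ * x) * f x)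
      ≤ ∫ x in Set.Ioc (0:ℝ) (a / δ), (1 - δ * x) * f x := by
    refine setIntegral_mono_on (aux_int_lin hmeas hnonneg hfint a δ _)
      (aux_int_lin hmeas hnonneg hfint 1 δ _) measurableSet_Ioc (fun x hx => ?_)
    exact mul_le_mul_of_nonneg_right (by linarith) (hnonneg x)
  have hdiv : a / δ ≤ 1 / δ := by gcongr
  have step2 : (∫ x in Set.Ioc (0:ℝ) (a / δ), (1 - δ * x) * f x)
      ≤ ∫ x in Set.Ioc (0:ℝ) (1 / δ), (1 - δ * x) * f x := by
    refine setIntegral_mono_set (aux_int_lin hmeas hnonneg hfint 1 δ _) ?_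
      ((Set.Ioc_subset_Ioc_right hdiv).eventuallyLE)
    filter_upwards [ae_restrict_mem measurableSet_Ioc] with x hx
    have := hx.2
    rw [le_div_iff₀ hδ] at this
    exact mul_nonneg (by nlinarith) (hnonneg x)
  linarith

lemma Ifun_one_lt_one {f : ℝ → ℝ} (hmeas : Measurable f) (hnonneg : ∀ x, 0 ≤ f x)
    (hfint : IntegrableOn f (Set.Ioi 0)) (hdensity : ∫ x in Set.Ioi (0 : ℝ), f x = 1)
    {δ : ℝ} (hδ : 0 < δ) : Ifun f δ 1 < 1 := by
  have hsplit := Ifun_split hmeas hnonneg hfint δ 1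
  set T := (1:ℝ) / δ with hT
  set J := ∫ x in Set.Ioc (0:ℝ) T, x * f x with hJdef
  have hJ0 : 0 ≤ J := setIntegral_nonneg measurableSet_Ioc
    (fun x hx => mul_nonneg hx.1.le (hnonneg x))
  rcases hJ0.lt_or_eq with hJ | hJ
  · have hle1 : (∫ x in Set.Ioc (0:ℝ) T, f x) ≤ 1 := by
      rw [← hdensity]
      exact setIntegral_mono_set hfint (Filter.Eventually.of_forall hnonneg)
        (Set.Ioc_subset_Ioi_self.eventuallyLE)
    rw [hsplit]
    nlinarith [mul_pos hδ hJ]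
  · have hzero : (fun x => x * f x) =ᵐ[MeasureTheory.volume.restrict (Set.Ioc (0:ℝ) T)] 0 := by
      refine (integral_eq_zero_iff_of_nonneg_ae ?_ (aux_int_xf hmeas hnonneg hfint T)).mp hJ.symm
      filter_upwards [ae_restrict_mem measurableSet_Ioc] with x hx
      exact mul_nonneg hx.1.le (hnonneg x)
    have hIz : Ifun f δ 1 = 0 := by
      unfold Ifun
      refine integral_eq_zero_of_ae ?_
      filter_upwards [hzero, ae_restrict_mem measurableSet_Ioc] with x h1 h2
      have hf0 : f x = 0 := by
        rcases mul_eq_zero.mp h1 with h | h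
        · exact absurd h (ne_of_gt h2.1)
        · exact h
      simp [hf0]
    rw [hIz]; norm_num

lemma factor_tendsto {f : ℝ → ℝ} (hmeas : Measurable f) (hnonneg : ∀ x, 0 ≤ f x)
    (hfint : IntegrableOn f (Set.Ioi 0)) (hdensity : ∫ x in Set.Ioi (0 : ℝ), f x = 1)
    {a : ℝ} (ha : 0 < a)
    (h2 : Tendsto (fun δ : ℝ => δ * ∫ x in Set.Ioc (0 : ℝ) (a / δ), x * f x)
      (nhdsWithin 0 (Set.Ioi 0)) (nhds 0)) :
    Tendsto (fun δ : ℝ => Ifun f δ a) (nhdsWithin 0 (Set.Ioi 0)) (nhds a) := by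
  have hb : Tendsto (fun δ : ℝ => a / δ) (nhdsWithin 0 (Set.Ioi 0)) atTop := by
    simpa [div_eq_mul_inv] using tendsto_inv_nhdsGT_zero.const_mul_atTop ha
  have h1 : Tendsto (fun δ : ℝ => ∫ x in Set.Ioc (0:ℝ) (a / δ), f x)
      (nhdsWithin 0 (Set.Ioi 0)) (nhds 1) := by
    have h := MeasureTheory.intervalIntegral_tendsto_integral_Ioi 0 hfint hb
    rw [hdensity] at h
    refine h.congr' ?_
    filter_upwards [self_mem_nhdsWithin] with δ hδ
    rw [intervalIntegral.integral_of_le (div_nonneg ha.le (le_of_lt hδ))]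
  have hcomb := (h1.const_mul a).sub h2
  rw [mul_one, sub_zero] at hcomb
  refine hcomb.congr' ?_
  refine Filter.Eventually.of_forall (fun δ => ?_)
  exact (Ifun_split hmeas hnonneg hfint δ a).symm

lemma prod_formula (m : ℕ) :
    ∏ i ∈ Finset.Icc 1 m, (((i : ℝ) + 1) / ((i : ℝ) + 2)) = 2 / ((m : ℝ) + 2) := by
  induction m with
  | zero => simp
  | succ k ih =>
    rw [Finset.prod_Icc_succ_top (by omega), ih]
    push_cast
    have h1 : (k : ℝ) + 2 ≠ 0 := by positivity
    have h2 : (k : ℝ) + 1 + 2 ≠ 0 := by positivity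
    field_simp
    ring

lemma Q_eq (f : ℝ → ℝ) (δ : ℝ) (n : ℕ) :
    Q f δ n = ∏ i ∈ Finset.Icc 1 (n - 1), Ifun f δ (((i : ℝ) + 1) / ((i : ℝ) + 2)) := by
  unfold Q Ifun
  refine Finset.prod_congr rfl (fun i _ => ?_)
  rw [div_div, mul_comm ((i:ℝ)+2) δ]

/-- if the density `f` satisfies `δ·∫_0^{c/δ} x f(x) dx → 0` as `δ → 0⁺`
for every `c > 0`, then `Q_δ(n) → 2/(n+1)` for every `n ≥ 2`, and consequently
`𝔼[τ] = ∑_{n=1}^∞ Q_δ(n) → +∞` as `δ → 0⁺`. -/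
theorem Q_tendsto_unperturbed_and_expectation_diverges
    (f : ℝ → ℝ) (hmeas : Measurable f) (hnonneg : ∀ x, 0 ≤ f x)
    (hdensity : ∫ x in Set.Ioi (0 : ℝ), f x = 1)
    (htrunc : ∀ c : ℝ, 0 < c →
      Tendsto (fun δ : ℝ => δ * ∫ x in Set.Ioc (0 : ℝ) (c / δ), x * f x)
        (nhdsWithin 0 (Set.Ioi 0)) (nhds 0)) :
    (∀ n : ℕ, 2 ≤ n →
      Tendsto (fun δ : ℝ => Q f δ n) (nhdsWithin 0 (Set.Ioi 0)) (nhds (2 / ((n : ℝ) + 1)))) ∧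
    Tendsto (fun δ : ℝ => ∑' n : ℕ, Q f δ (n + 1)) (nhdsWithin 0 (Set.Ioi 0)) atTop := by
  have hfint : IntegrableOn f (Set.Ioi 0) := by
    by_contra h
    rw [MeasureTheory.integral_undef h] at hdensity
    norm_num at hdensity
  -- the basic limit of each factor
  have hfac : ∀ i : ℕ, Tendsto (fun δ : ℝ => Ifun f δ (((i : ℝ) + 1) / ((i : ℝ) + 2)))
      (nhdsWithin 0 (Set.Ioi 0)) (nhds (((i : ℝ) + 1) / ((i : ℝ) + 2))) := by
    intro i
    have hpos : (0:ℝ) < ((i : ℝ) + 1) / ((i : ℝ) + 2) := by positivity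
    exact factor_tendsto hmeas hnonneg hfint hdensity hpos (htrunc _ hpos)
  have hQ : ∀ n : ℕ, 2 ≤ n →
      Tendsto (fun δ : ℝ => Q f δ n) (nhdsWithin 0 (Set.Ioi 0)) (nhds (2 / ((n : ℝ) + 1))) := by
    intro n hn
    obtain ⟨m, rfl⟩ : ∃ m, n = m + 2 := ⟨n - 2, by omega⟩
    have key := tendsto_finset_prod (f := fun (i : ℕ) (δ : ℝ) =>
        Ifun f δ (((i : ℝ) + 1) / ((i : ℝ) + 2))) (Finset.Icc 1 (m + 1)) (fun i _ => hfac i)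
    rw [prod_formula (m + 1)] at key
    have hlim : (2 : ℝ) / ((((m + 1) : ℕ) : ℝ) + 2) = 2 / ((((m + 2) : ℕ) : ℝ) + 1) := by
      push_cast; ring_nf
    rw [hlim] at key
    refine key.congr' ?_
    refine Filter.Eventually.of_forall (fun δ => ?_)
    simp only [Q_eq]
    norm_num
  refine ⟨hQ, ?_⟩
  -- nonnegativity and geometric domination
  have hQ0 : ∀ δ : ℝ, 0 < δ → ∀ n : ℕ, 0 ≤ Q f δ (n + 1) := by
    intro δ hδ n
    rw [Q_eq]
    exact Finset.prod_nonneg (fun i _ => Ifun_nonneg hnonneg hδ (by positivity))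
  have hQle : ∀ δ : ℝ, 0 < δ → ∀ n : ℕ, Q f δ (n + 1) ≤ (Ifun f δ 1) ^ n := by
    intro δ hδ n
    rw [Q_eq]
    have hc : (n + 1 - 1 : ℕ) = n := by omega
    rw [hc]
    calc ∏ i ∈ Finset.Icc 1 n, Ifun f δ (((i : ℝ) + 1) / ((i : ℝ) + 2))
        ≤ ∏ _i ∈ Finset.Icc 1 n, Ifun f δ 1 := by
          refine Finset.prod_le_prod (fun i _ => Ifun_nonneg hnonneg hδ (by positivity))
            (fun i _ => Ifun_le hmeas hnonneg hfint hδ (by positivity) ?_)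
          rw [div_le_one (by positivity)]; linarith
      _ = (Ifun f δ 1) ^ n := by rw [Finset.prod_const, Nat.card_Icc]; norm_num
  have hsummable : ∀ δ : ℝ, 0 < δ → Summable (fun n : ℕ => Q f δ (n + 1)) := by
    intro δ hδ
    exact Summable.of_nonneg_of_le (hQ0 δ hδ) (hQle δ hδ)
      (summable_geometric_of_lt_one (Ifun_nonneg hnonneg hδ zero_le_one)
        (Ifun_one_lt_one hmeas hnonneg hfint hdensity hδ))
  -- divergence of the limiting partial sums
  have hS : Tendsto (fun M : ℕ => ∑ n ∈ Finset.range M, 2 / ((n : ℝ) + 2)) atTop atTop := by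
    refine tendsto_atTop_mono (fun M => Finset.sum_le_sum (fun n _ => ?_))
      Real.tendsto_sum_range_one_div_nat_succ_atTop
    rw [div_le_div_iff₀ (by positivity) (by positivity)]
    nlinarith [Nat.cast_nonneg (α := ℝ) n]
  -- partial sums of Q tend to the limiting partial sums
  have hpart : ∀ M : ℕ, Tendsto (fun δ : ℝ => ∑ n ∈ Finset.range M, Q f δ (n + 1))
      (nhdsWithin 0 (Set.Ioi 0)) (nhds (∑ n ∈ Finset.range M, 2 / ((n : ℝ) + 2))) := by
    intro M
    refine tendsto_finset_sum _ (fun n _ => ?_)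
    rcases n with _ | k
    · have h1 : (fun δ : ℝ => Q f δ (0 + 1)) = fun _ => (1:ℝ) := by
        funext δ
        rw [Q_eq]
        simp
      rw [h1]
      norm_num
    · have := hQ (k + 2) (by omega)
      have hcast : (2 : ℝ) / ((((k + 2) : ℕ) : ℝ) + 1) = 2 / (((k+1 : ℕ) : ℝ) + 2) := by
        push_cast; ring_nf
      rw [hcast] at this
      exact this
  rw [tendsto_atTop]
  intro b
  obtain ⟨M, hM⟩ := (hS.eventually_ge_atTop (b + 1)).exists
  have hlt : b < ∑ n ∈ Finset.range M, 2 / ((n : ℝ) + 2) := by linarith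
  filter_upwards [(hpart M).eventually (eventually_ge_nhds hlt), self_mem_nhdsWithin]
    with δ h1 hδpos
  calc b ≤ ∑ n ∈ Finset.range M, Q f δ (n + 1) := h1
    _ ≤ ∑' n : ℕ, Q f δ (n + 1) :=
        Summable.sum_le_tsum (Finset.range M) (fun n _ => hQ0 δ hδpos n) (hsummable δ hδpos)
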